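/- arXiv:1401.1266 — 2 statements merged into one kernel-verified Lean document; each statement's English description precedes it below -/
import Mathlib

section
/- Let A0 be a c.e. subset of ℕ and R a computable set disjoint from A0, and set A = A0 ∪ R. Let G be a countable family of c.e. sets each disjoint from A. Then G generates D(A) if and only if G ∪ {R} generates D(A0). -/
open Set Function

/-- A set of naturals is computably enumerable (c.e.) -/
def CESet (A : Set ℕ) : Prop := REPred (· ∈ A)

/-- A set of naturals is computable -/
def ComputableSet (A : Set ℕ) : Prop := ComputablePred (· ∈ A)

/-- X ⊆* Y : X is almost contained in Y -/
def SubsetStar (X Y : Set ℕ) : Prop := (X \ Y).Finite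

/-- X =* Y : X and Y differ by a finite set -/
def EqStar (X Y : Set ℕ) : Prop := (X \ Y).Finite ∧ (Y \ X).Finite

/-- G is a generating set for 𝒟(A): a countable family of c.e. sets, each disjoint
from A, such that every c.e. set disjoint from A is almost covered by finitely many
members of G. -/
def Generates (A : Set ℕ) (G : Set (Set ℕ)) : Prop :=
  G.Countable ∧ (∀ X ∈ G, CESet X) ∧ (∀ X ∈ G, Disjoint X A) ∧
  ∀ D : Set ℕ, CESet D → Disjoint D A →
    ∃ F : Set (Set ℕ), F ⊆ G ∧ F.Finite ∧ SubsetStar D (⋃₀ F)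

/-- S is simple -/
def SimpleSet (S : Set ℕ) : Prop :=
  CESet S ∧ Sᶜ.Infinite ∧ ∀ W : Set ℕ, CESet W → Disjoint W S → W.Finite

/-- A is 𝒟-maximal -/
def DMaximal (A : Set ℕ) : Prop :=
  CESet A ∧ ∀ W : Set ℕ, CESet W → ∃ D : Set ℕ, CESet D ∧ Disjoint D A ∧
    (SubsetStar W (A ∪ D) ∨ EqStar (W ∪ A ∪ D) Set.univ)

/-- M is r-maximal -/
def RMaximal (M : Set ℕ) : Prop :=
  CESet M ∧ Mᶜ.Infinite ∧
    ∀ R : Set ℕ, ComputableSet R → (R ∩ Mᶜ).Finite ∨ (Rᶜ ∩ Mᶜ).Finite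

/-- M is maximal -/
def MaximalSet (M : Set ℕ) : Prop :=
  CESet M ∧ Mᶜ.Infinite ∧
    ∀ W : Set ℕ, CESet W → M ⊆ W → (W \ M).Finite ∨ Wᶜ.Finite

/-- B is atomless -/
def AtomlessSet (B : Set ℕ) : Prop :=
  ∀ C : Set ℕ, CESet C → B ⊆ C → Cᶜ.Infinite →
    ∃ E : Set ℕ, CESet E ∧ SubsetStar C E ∧ (E \ C).Infinite ∧ Eᶜ.Infinite

/-- A0, A1 form a Friedberg splitting of A -/
def FriedbergSplitting (A0 A1 A : Set ℕ) : Prop :=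
  CESet A0 ∧ CESet A1 ∧ Disjoint A0 A1 ∧ A0 ∪ A1 = A ∧
    ∀ W : Set ℕ, CESet W → ¬ CESet (W \ A) → ¬ CESet (W \ A0) ∧ ¬ CESet (W \ A1)

/-- E is a major subset of D -/
def MajorIn (E D : Set ℕ) : Prop :=
  CESet E ∧ CESet D ∧ E ⊆ D ∧ (D \ E).Infinite ∧
    ∀ W : Set ℕ, CESet W → SubsetStar Dᶜ W → SubsetStar Eᶜ W

/-- H is hh-simple: the lattice of c.e. supersets of H mod finite is a boolean algebra -/
def HHSimple (H : Set ℕ) : Prop :=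
  CESet H ∧ Hᶜ.Infinite ∧
    ∀ W : Set ℕ, CESet W → ∃ V : Set ℕ, CESet V ∧
      EqStar ((W ∪ H) ∩ (V ∪ H)) H ∧ EqStar (W ∪ V ∪ H) Set.univ

/-- A is strongly r-separable -/
def StronglyRSeparable (A : Set ℕ) : Prop :=
  ∀ B : Set ℕ, CESet B → Disjoint B A →
    ∃ C : Set ℕ, ComputableSet C ∧ B ⊆ C ∧ Disjoint C A ∧ (C \ B).Infinite

/-- Structure of a Type 5 generating family: D0 together with the R_i. -/
def Type5Family (D0 : Set ℕ) (R : ℕ → Set ℕ) : Prop :=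
  CESet D0 ∧ ¬ ComputableSet D0 ∧ D0.Infinite ∧
  Function.Injective R ∧ (∀ i, D0 ≠ R i) ∧
  (∀ i, ComputableSet (R i) ∧ (R i).Infinite) ∧
  Pairwise (Function.onFun Disjoint R) ∧
  (∀ i, Disjoint D0 (R i))

/-- Structure of a Type 7 generating family: D0 together with the R_i. -/
def Type7Family (D0 : Set ℕ) (R : ℕ → Set ℕ) : Prop :=
  CESet D0 ∧ ¬ ComputableSet D0 ∧
  Function.Injective R ∧ (∀ i, D0 ≠ R i) ∧
  (∀ i, ComputableSet (R i) ∧ (R i).Infinite) ∧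
  Pairwise (Function.onFun Disjoint R) ∧
  {i : ℕ | (D0 ∩ R i).Nonempty}.Infinite

/-- Structure of a Type 8 generating family: the D_i together with the R_i. -/
def Type8Family (D R : ℕ → Set ℕ) : Prop :=
  Function.Injective D ∧ Function.Injective R ∧ (∀ i j, D i ≠ R j) ∧
  (∀ i, CESet (D i) ∧ ¬ ComputableSet (D i)) ∧
  Pairwise (Function.onFun Disjoint D) ∧
  (∀ i, ComputableSet (R i) ∧ (R i).Infinite) ∧
  Pairwise (Function.onFun Disjoint R)

/-- Structure of a Type 9 generating family: the nested D_i together with the R_i. -/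
def Type9Family (D R : ℕ → Set ℕ) : Prop :=
  Function.Injective R ∧ (∀ i j, D i ≠ R j) ∧
  (∀ i, ComputableSet (R i) ∧ (R i).Infinite) ∧
  Pairwise (Function.onFun Disjoint R) ∧
  (∀ i, CESet (D i) ∧ ¬ ComputableSet (D i) ∧ (D i).Infinite) ∧
  (∀ l, D l ⊆ D (l + 1)) ∧
  (∀ l, ¬ CESet (D (l + 1) \ D l)) ∧
  (∀ l, {j : ℕ | (R j \ D l).Infinite}.Infinite)

def IsType1 (G : Set (Set ℕ)) : Prop := G = {∅}

def IsType2 (G : Set (Set ℕ)) : Prop :=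
  ∃ R : Set ℕ, G = {R} ∧ ComputableSet R ∧ R.Infinite

def IsType3 (G : Set (Set ℕ)) : Prop :=
  ∃ W : Set ℕ, G = {W} ∧ CESet W ∧ ¬ ComputableSet W ∧ W.Infinite

def IsType4 (G : Set (Set ℕ)) : Prop :=
  ∃ R : ℕ → Set ℕ, G = Set.range R ∧ Function.Injective R ∧
    (∀ i, ComputableSet (R i) ∧ (R i).Infinite) ∧
    Pairwise (Function.onFun Disjoint R)

def IsType5 (G : Set (Set ℕ)) : Prop :=
  ∃ (D0 : Set ℕ) (R : ℕ → Set ℕ), G = insert D0 (Set.range R) ∧ Type5Family D0 R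

def IsType6 (G : Set (Set ℕ)) : Prop :=
  ∃ D : ℕ → Set ℕ, G = Set.range D ∧ Function.Injective D ∧
    (∀ i, CESet (D i) ∧ ¬ ComputableSet (D i) ∧ (D i).Infinite) ∧
    Pairwise (Function.onFun Disjoint D)

def IsType7 (G : Set (Set ℕ)) : Prop :=
  ∃ (D0 : Set ℕ) (R : ℕ → Set ℕ), G = insert D0 (Set.range R) ∧ Type7Family D0 R

def IsType8 (G : Set (Set ℕ)) : Prop :=
  ∃ D R : ℕ → Set ℕ, G = Set.range D ∪ Set.range R ∧ Type8Family D R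

def IsType9 (G : Set (Set ℕ)) : Prop :=
  ∃ D R : ℕ → Set ℕ, G = Set.range D ∪ Set.range R ∧ Type9Family D R

def IsType10 (G : Set (Set ℕ)) : Prop :=
  ∃ D : ℕ → Set ℕ, G = Set.range D ∧
    (∀ i, CESet (D i) ∧ ¬ ComputableSet (D i) ∧ (D i).Infinite) ∧
    (∀ l, D l ⊆ D (l + 1)) ∧
    (∀ l, ¬ CESet (D (l + 1) \ D l))

/-- G is a generating set of Type n (n = 1, …, 10). -/
def GenTypeN (n : ℕ) (G : Set (Set ℕ)) : Prop :=
  match n with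
  | 1 => IsType1 G
  | 2 => IsType2 G
  | 3 => IsType3 G
  | 4 => IsType4 G
  | 5 => IsType5 G
  | 6 => IsType6 G
  | 7 => IsType7 G
  | 8 => IsType8 G
  | 9 => IsType9 G
  | 10 => IsType10 G
  | _ => False

/-- The c.e. set A is of Type n: 𝒟(A) has a generating set of Type n
but no generating set of any Type m < n. -/
def SetOfType (A : Set ℕ) (n : ℕ) : Prop :=
  (∃ G : Set (Set ℕ), Generates A G ∧ GenTypeN n G) ∧
  ∀ m : ℕ, m < n → ¬ ∃ G : Set (Set ℕ), Generates A G ∧ GenTypeN m G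

/-- (F_i) is an A-special list. -/
def ASpecialList (A : Set ℕ) (F : ℕ → Set ℕ) : Prop :=
  F 0 = A ∧ (∀ i, CESet (F i) ∧ ¬ ComputableSet (F i)) ∧
  Pairwise (Function.onFun Disjoint F) ∧
  ∀ W : Set ℕ, CESet W → ∃ i : ℕ,
    SubsetStar W (⋃ l ≤ i, F l) ∨ EqStar (W ∪ ⋃ l ≤ i, F l) Set.univ

/-
Removing a computable set `R` from a c.e. set `D` keeps it c.e., so a c.e. set disjoint from `A0`
is, up to the extra generator `R`, a c.e. set disjoint from `A0 ∪ R`. Conversely `R` is useless for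
covering sets disjoint from `A0 ∪ R`, so it can be dropped from any finite cover.
-/

theorem REPred.and {α : Type*} [Primcodable α] {p q : α → Prop} (hp : REPred p)
    (hq : REPred q) : REPred fun a => p a ∧ q a := by
  have h : Partrec fun a => (Part.assert (p a) fun _ => Part.some ()).bind
      fun _ => Part.assert (q a) fun _ => Part.some () :=
    hp.bind (hq.comp Computable.fst)
  exact h.dom_re.of_eq fun a => by simp [Part.assert]

theorem ComputableSet.ceSet {R : Set ℕ} (hR : ComputableSet R) : CESet R :=
  ComputablePred.to_re hR

theorem CESet.diff {D R : Set ℕ} (hD : CESet D) (hR : ComputableSet R) : CESet (D \ R) :=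
  REPred.and hD (ComputablePred.not hR).to_re

theorem SubsetStar.insert_of_diff {D R : Set ℕ} {F : Set (Set ℕ)}
    (h : SubsetStar (D \ R) (⋃₀ F)) : SubsetStar D (⋃₀ insert R F) :=
  h.subset fun _ ⟨hxD, hx⟩ =>
    ⟨⟨hxD, fun hxR => hx ⟨R, mem_insert R F, hxR⟩⟩,
      fun ⟨Y, hYF, hxY⟩ => hx ⟨Y, mem_insert_of_mem R hYF, hxY⟩⟩

theorem SubsetStar.diff_singleton_of_disjoint {D R : Set ℕ} {F : Set (Set ℕ)}
    (h : SubsetStar D (⋃₀ F)) (hDR : Disjoint D R) : SubsetStar D (⋃₀ (F \ {R})) :=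
  h.subset fun _ ⟨hxD, hx⟩ => ⟨hxD, fun ⟨Y, hYF, hxY⟩ => hx ⟨Y, ⟨hYF, fun hYR : Y = R =>
    hDR.le_bot ⟨hxD, hYR ▸ hxY⟩⟩, hxY⟩⟩

theorem Generates.union_singleton {A0 R : Set ℕ} {G : Set (Set ℕ)}
    (hG : Generates (A0 ∪ R) G) (hR : ComputableSet R) (hdisj : Disjoint A0 R) :
    Generates A0 (G ∪ {R}) := by
  obtain ⟨hGc, hce, hGdisj, hcover⟩ := hG
  refine ⟨hGc.union (countable_singleton R), ?_, ?_, fun D hD hDA0 => ?_⟩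
  · rintro X (hX | rfl)
    exacts [hce X hX, hR.ceSet]
  · rintro X (hX | rfl)
    exacts [(hGdisj X hX).mono_right subset_union_left, hdisj.symm]
  · have hDR : Disjoint (D \ R) (A0 ∪ R) :=
      disjoint_union_right.mpr ⟨hDA0.mono_left sdiff_subset, disjoint_sdiff_left⟩
    obtain ⟨F, hFG, hFfin, hFcover⟩ := hcover (D \ R) (hD.diff hR) hDR
    refine ⟨insert R F, ?_, hFfin.insert R, hFcover.insert_of_diff⟩
    rw [Set.union_singleton]
    exact insert_subset_insert hFG

theorem Generates.of_union_singleton {A0 R : Set ℕ} {G : Set (Set ℕ)}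
    (hG : Generates A0 (G ∪ {R})) (hGdisj : ∀ X ∈ G, Disjoint X (A0 ∪ R)) :
    Generates (A0 ∪ R) G := by
  obtain ⟨hGc, hce, -, hcover⟩ := hG
  refine ⟨hGc.mono subset_union_left, fun X hX => hce X (Or.inl hX), hGdisj,
    fun D hD hDA => ?_⟩
  obtain ⟨hDA0, hDR⟩ := disjoint_union_right.mp hDA
  obtain ⟨F, hFG, hFfin, hFcover⟩ := hcover D hD hDA0
  refine ⟨F \ {R}, ?_, hFfin.sdiff, hFcover.diff_singleton_of_disjoint hDR⟩
  rwa [sdiff_subset_iff, union_comm]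

theorem stmt_7_general (A0 R : Set ℕ) (hR : ComputableSet R)
    (hdisj : Disjoint A0 R) (A : Set ℕ) (hA : A = A0 ∪ R)
    (G : Set (Set ℕ))
    (hGdisj : ∀ X ∈ G, Disjoint X A) :
    Generates A G ↔ Generates A0 (G ∪ {R}) := by
  subst hA
  exact ⟨fun hG => hG.union_singleton hR hdisj, fun hG => hG.of_union_singleton hGdisj⟩

theorem stmt_7 (A0 R : Set ℕ) (hA0 : CESet A0) (hR : ComputableSet R)
    (hdisj : Disjoint A0 R) (A : Set ℕ) (hA : A = A0 ∪ R)
    (G : Set (Set ℕ)) (hGc : G.Countable) (hce : ∀ X ∈ G, CESet X)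
    (hGdisj : ∀ X ∈ G, Disjoint X A) :
    Generates A G ↔ Generates A0 (G ∪ {R}) :=
  stmt_7_general A0 R hR hdisj A hA G hGdisj
end

section
/- Let A be a noncomputable c.e. subset of ℕ. Then there exists a computable set R disjoint from A such that A ∪ R is simple if and only if there exists a computable set R' such that the singleton family {R'} generates D(A). -/
open Set Function

/-!
For computable `R` disjoint from `A`, `{R}` generates `𝒟(A)` exactly when every c.e. set
disjoint from `A` is almost contained in `R`, i.e. when every c.e. set disjoint from `A ∪ R`
is finite. The remaining condition for simplicity, that `A ∪ R` is coinfinite, comes from the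
noncomputability of `A`: if `(A ∪ R)ᶜ` were finite, `A` would be the complement of the
computable set `R ∪ (A ∪ R)ᶜ`.
-/

section Computability

variable {α : Type*} [Primcodable α] {p q : α → Prop}

theorem REPred.and_computablePred (hp : REPred p) (hq : ComputablePred q) :
    REPred fun a => p a ∧ q a := by
  obtain ⟨g, hg, rfl⟩ := ComputablePred.computable_iff.1 hq
  have : Partrec fun a => cond (g a) (Part.assert (p a) fun _ => Part.some ()) Part.none :=
    Partrec.cond hg hp Partrec.none
  refine this.of_eq fun a => Part.ext fun u => ?_
  cases h : g a <;> simp [Part.assert, h]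

theorem REPred.or_computablePred (hp : REPred p) (hq : ComputablePred q) :
    REPred fun a => p a ∨ q a := by
  obtain ⟨g, hg, rfl⟩ := ComputablePred.computable_iff.1 hq
  have : Partrec fun a => cond (g a) (Part.some ()) (Part.assert (p a) fun _ => Part.some ()) :=
    Partrec.cond hg (Computable.const ()).partrec hp
  refine this.of_eq fun a => Part.ext fun u => ?_
  cases h : g a <;> simp [Part.assert, h]

theorem ComputablePred.or (hp : ComputablePred p) (hq : ComputablePred q) :
    ComputablePred fun a => p a ∨ q a := by
  obtain ⟨f, hf, rfl⟩ := ComputablePred.computable_iff.1 hp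
  obtain ⟨g, hg, rfl⟩ := ComputablePred.computable_iff.1 hq
  refine ComputablePred.computable_iff.2 ⟨fun a => f a || g a, ?_, ?_⟩
  · exact Primrec.or.to_comp.comp hf hg
  · funext a
    simp

theorem Set.Finite.computablePred_mem {s : Set α} (hs : s.Finite) : ComputablePred (· ∈ s) := by
  classical
  have : PrimrecPred fun a => ∃ b ∈ hs.toFinset.toList, b = a :=
    (PrimrecRel.exists_mem_list Primrec.eq).comp (Primrec.const _) Primrec.id
  exact this.computablePred.of_eq fun a => by simp

end Computability

theorem CESet.diff_of_computableSet {W R : Set ℕ} (hW : CESet W) (hR : ComputableSet R) :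
    CESet (W \ R) :=
  hW.and_computablePred hR.not

theorem CESet.union_of_computableSet {W R : Set ℕ} (hW : CESet W) (hR : ComputableSet R) :
    CESet (W ∪ R) :=
  hW.or_computablePred hR

theorem generates_singleton_iff {A R : Set ℕ} :
    Generates A {R} ↔
      CESet R ∧ Disjoint R A ∧ ∀ D, CESet D → Disjoint D A → SubsetStar D R := by
  refine ⟨fun ⟨_, hce, hdisj, hcov⟩ => ⟨hce R rfl, hdisj R rfl, fun D hD hDA => ?_⟩,
    fun ⟨hce, hdisj, hcov⟩ => ⟨countable_singleton R, by simpa, by simpa, fun D hD hDA =>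
      ⟨{R}, subset_rfl, finite_singleton R, by simpa using hcov D hD hDA⟩⟩⟩
  obtain ⟨F, hF, -, hDF⟩ := hcov D hD hDA
  exact hDF.subset (sdiff_subset_sdiff_right (sUnion_subset fun X hX => (hF hX).le))

theorem generates_singleton_of_simpleSet_union {A R : Set ℕ} (hR : ComputableSet R)
    (hRA : Disjoint R A) (hsimple : SimpleSet (A ∪ R)) : Generates A {R} := by
  refine generates_singleton_iff.2 ⟨hR.to_re, hRA, fun D hD hDA => ?_⟩
  have hdisj : Disjoint (D \ R) (A ∪ R) :=
    disjoint_union_right.2 ⟨hDA.mono_left sdiff_subset, disjoint_sdiff_left⟩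
  exact hsimple.2.2 _ (hD.diff_of_computableSet hR) hdisj

theorem simpleSet_union_of_generates_singleton {A R : Set ℕ} (hA : CESet A)
    (hnc : ¬ ComputableSet A) (hR : ComputableSet R) (hgen : Generates A {R}) :
    SimpleSet (A ∪ R) := by
  obtain ⟨-, hRA, hcov⟩ := generates_singleton_iff.1 hgen
  refine ⟨hA.union_of_computableSet hR, fun hfin => hnc ?_, fun W hW hWAR => ?_⟩
  · refine (hR.or hfin.computablePred_mem).not.of_eq fun a => ?_
    have hnotMemR := hRA.notMem_of_mem_right (a := a)
    simp only [mem_compl_iff, mem_union]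
    tauto
  · obtain ⟨hWA, hWR⟩ := disjoint_union_right.1 hWAR
    simpa [SubsetStar, hWR.sdiff_eq_left] using hcov W hW hWA

theorem stmt_8 (A : Set ℕ) (hA : CESet A) (hnc : ¬ ComputableSet A) :
    (∃ R : Set ℕ, ComputableSet R ∧ Disjoint R A ∧ SimpleSet (A ∪ R)) ↔
      (∃ R' : Set ℕ, ComputableSet R' ∧ Generates A {R'}) :=
  ⟨fun ⟨R, hR, hRA, hsimple⟩ => ⟨R, hR, generates_singleton_of_simpleSet_union hR hRA hsimple⟩,
    fun ⟨R, hR, hgen⟩ => ⟨R, hR, (generates_singleton_iff.1 hgen).2.1,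
      simpleSet_union_of_generates_singleton hA hnc hR hgen⟩⟩
end
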